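/- arXiv:2601.15523 — 2 statements merged into one kernel-verified Lean document; each statement's English description precedes it below -/
import Mathlib

section
/- Let V : ℝ → ℝ be differentiable with derivative V' Lipschitz continuous with constant γ > 0, and suppose there exists r₀ > 0 with |V''(r₀)| = γ (attained supremum, V'' continuous). For η even, η > 2, particles x₀,…,x_{η−1} ∈ ℝ^d, define V_pair(x) = (1/2)·Σ_{i≠j} V(‖x_i − x_j‖). Then the Lipschitz constant of ∇V_pair (equivalently, sup over configurations of the operator norm of the Hessian of V_pair) is at least γη/4; in particular Lip(∇V_pair) ∈ Ω(γη). -/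
/-!
Put the particles on a line through a unit vector `e`: particle `0` at `t • e` and particle
`j ≠ 0` at `-(δ j) • e`. For `t > 0` they are distinct, so `V_pair` is differentiable there, and
moving particle `0` along `e` changes only its distances `t + δ j` to the others; hence the
directional derivative `∑_{j ≠ 0} V'(t + δ j)` is `K`-Lipschitz in `t` for every `δ > 0`. As
`δ → 0` the Lipschitz bound survives, so `(η - 1) V'` is `K`-Lipschitz on `(0, ∞)` and
`(η - 1) |V''(r₀)| ≤ K`, which implies `γ η / 4 ≤ K` since `η ≥ 2`.
-/

open scoped RealInnerProductSpace
open Finset Set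

section Line

variable {E : Type*} [NormedAddCommGroup E] [InnerProductSpace ℝ E]

theorem LipschitzWith.inner_comp_line {F : E → E} {K : NNReal} (hF : LipschitzWith K F) (x : E)
    {v : E} (hv : ‖v‖ = 1) : LipschitzWith K fun t : ℝ => ⟪F (x + t • v), v⟫ := by
  refine LipschitzWith.of_dist_le_mul fun s t => ?_
  calc dist ⟪F (x + s • v), v⟫ ⟪F (x + t • v), v⟫
      = |⟪F (x + s • v) - F (x + t • v), v⟫| := by rw [Real.dist_eq, inner_sub_left]
    _ ≤ ‖F (x + s • v) - F (x + t • v)‖ * ‖v‖ := abs_real_inner_le_norm _ _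
    _ = dist (F (x + s • v)) (F (x + t • v)) := by rw [hv, mul_one, dist_eq_norm]
    _ ≤ K * dist (x + s • v) (x + t • v) := hF.dist_le_mul _ _
    _ = K * dist s t := by
      rw [dist_add_left, dist_eq_norm, ← sub_smul, norm_smul, hv, mul_one, Real.dist_eq,
        Real.norm_eq_abs]

variable [CompleteSpace E]

theorem lipschitzOnWith_of_hasDerivAt_comp_line {f : E → ℝ} {K : NNReal}
    (hK : LipschitzWith K (gradient f)) (x : E) {v : E} (hv : ‖v‖ = 1) {g : ℝ → ℝ} {U : Set ℝ}
    (hf : ∀ t ∈ U, DifferentiableAt ℝ f (x + t • v))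
    (hg : ∀ t ∈ U, HasDerivAt (fun s => f (x + s • v)) (g t) t) :
    LipschitzOnWith K g U := by
  have hline : ∀ t, HasDerivAt (fun s : ℝ => x + s • v) v t := fun t => by
    simpa using ((hasDerivAt_id t).smul_const v).const_add x
  have hg_eq : ∀ t ∈ U, g t = ⟪gradient f (x + t • v), v⟫ := fun t ht => (hg t ht).unique <| by
    simpa [InnerProductSpace.toDual_apply_apply, Function.comp_def] using
      (hf t ht).hasGradientAt.hasFDerivAt.comp_hasDerivAt t (hline t)
  intro s hs t ht
  simpa only [hg_eq s hs, hg_eq t ht] using hK.inner_comp_line x hv s t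

end Line

section PairPotential

variable {ι E : Type*} [Fintype ι] [DecidableEq ι] [NormedAddCommGroup E]

noncomputable def pairPotential (V : ℝ → ℝ) (x : PiLp 2 fun _ : ι => E) : ℝ :=
  (1/2) * ∑ i, ∑ j, if j ≠ i then V ‖x i - x j‖ else 0

theorem differentiableAt_pairPotential [InnerProductSpace ℝ E] {V : ℝ → ℝ} (hV : Differentiable ℝ V)
    {x : PiLp 2 fun _ : ι => E} (hx : Pairwise fun i j => x i ≠ x j) :
    DifferentiableAt ℝ (pairPotential V) x := by
  refine .const_mul (.fun_sum fun i _ => .fun_sum fun j _ => ?_) _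
  split_ifs with hji
  · have hproj : DifferentiableAt ℝ (fun y : PiLp 2 (fun _ : ι => E) => y i - y j) x :=
      (PiLp.proj 2 _ i).differentiableAt.sub (PiLp.proj 2 _ j).differentiableAt
    exact (hV _).comp x (hproj.norm ℝ (sub_ne_zero.2 (hx hji.symm)))
  · exact differentiableAt_const _

theorem pairPotential_eq_sum_erase_add (V : ℝ → ℝ) (x : PiLp 2 fun _ : ι => E) (i₀ : ι) :
    pairPotential V x = ∑ j ∈ univ.erase i₀, V ‖x i₀ - x j‖ +
      (1/2) * ∑ i ∈ univ.erase i₀, ∑ j ∈ univ.erase i₀, if j ≠ i then V ‖x i - x j‖ else 0 := by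
  have hrow : ∀ i ∈ univ.erase i₀, (∑ j, if j ≠ i then V ‖x i - x j‖ else 0) =
      V ‖x i₀ - x i‖ + ∑ j ∈ univ.erase i₀, if j ≠ i then V ‖x i - x j‖ else 0 := by
    intro i hi
    rw [← add_sum_erase _ _ (mem_univ i₀), if_pos (ne_of_mem_erase hi).symm, norm_sub_rev]
  have hrow₀ : (∑ j, if j ≠ i₀ then V ‖x i₀ - x j‖ else 0) =
      ∑ j ∈ univ.erase i₀, V ‖x i₀ - x j‖ := by
    rw [← sum_filter, filter_ne']
  rw [pairPotential, ← add_sum_erase _ _ (mem_univ i₀), hrow₀, sum_congr rfl hrow, sum_add_distrib]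
  ring

theorem pairPotential_add_smul_single [NormedSpace ℝ E] (V : ℝ → ℝ) (x : PiLp 2 fun _ : ι => E)
    (i₀ : ι) (e : E) (t : ℝ) :
    pairPotential V (x + t • WithLp.toLp 2 (Pi.single i₀ e)) =
      ∑ j ∈ univ.erase i₀, V ‖x i₀ + t • e - x j‖ +
        (pairPotential V x - ∑ j ∈ univ.erase i₀, V ‖x i₀ - x j‖) := by
  set y : PiLp 2 (fun _ : ι => E) := x + t • WithLp.toLp 2 (Pi.single i₀ e)
  have hy₀ : y i₀ = x i₀ + t • e := by simp [y]
  have hy : ∀ i ∈ univ.erase i₀, y i = x i := fun i hi => by simp [y, ne_of_mem_erase hi]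
  have hrow : ∑ j ∈ univ.erase i₀, V ‖y i₀ - y j‖ = ∑ j ∈ univ.erase i₀, V ‖x i₀ + t • e - x j‖ :=
    sum_congr rfl fun j hj => by rw [hy₀, hy j hj]
  have hrest : (∑ i ∈ univ.erase i₀, ∑ j ∈ univ.erase i₀, if j ≠ i then V ‖y i - y j‖ else 0) =
      ∑ i ∈ univ.erase i₀, ∑ j ∈ univ.erase i₀, if j ≠ i then V ‖x i - x j‖ else 0 :=
    sum_congr rfl fun i hi => sum_congr rfl fun j hj => by rw [hy i hi, hy j hj]
  rw [pairPotential_eq_sum_erase_add V y i₀, pairPotential_eq_sum_erase_add V x i₀, hrow, hrest]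
  ring

end PairPotential

section Chain

variable {E : Type*} [NormedAddCommGroup E] [InnerProductSpace ℝ E] [CompleteSpace E]

theorem lipschitzOnWith_sum_deriv_add_mul {η : ℕ} [NeZero η] {V : ℝ → ℝ}
    (hV : Differentiable ℝ V) {e : E} (he : ‖e‖ = 1) {K : NNReal}
    (hK : LipschitzWith K (gradient (pairPotential (ι := Fin η) (E := E) V))) {δ : ℝ} (hδ : 0 < δ) :
    LipschitzOnWith K (fun t => ∑ j ∈ univ.erase (0 : Fin η), deriv V (t + δ * j)) (Ioi 0) := by
  set x : PiLp 2 (fun _ : Fin η => E) := WithLp.toLp 2 fun i => -(δ * i) • e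
  set v : PiLp 2 (fun _ : Fin η => E) := WithLp.toLp 2 (Pi.single 0 e)
  have hv : ‖v‖ = 1 := by simp [v, he]
  have hcoord : ∀ t i, (x + t • v) i = (if i = 0 then t else -(δ * i)) • e := by
    intro t i
    by_cases hi : i = 0 <;> simp [x, v, hi]
  have hdist : ∀ t > 0, ∀ j : Fin η, ‖x 0 + t • e - x j‖ = t + δ * j := by
    intro t ht j
    have : x 0 + t • e - x j = (t + δ * j) • e := by simp [x, add_smul]
    rw [this, norm_smul, he, mul_one, Real.norm_eq_abs, abs_of_pos (by positivity)]
  set C := pairPotential V x - ∑ j ∈ univ.erase 0, V ‖x 0 - x j‖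
  apply lipschitzOnWith_of_hasDerivAt_comp_line hK x hv
  · intro t ht
    refine differentiableAt_pairPotential hV fun i j hij => ?_
    change (x + t • v) i ≠ (x + t • v) j
    rw [hcoord, hcoord]
    refine (smul_left_injective ℝ (norm_ne_zero_iff.1 (he ▸ one_ne_zero))).ne ?_
    have hpos : ∀ k : Fin η, 0 ≤ δ * k := fun k => by positivity
    rcases eq_or_ne i 0 with rfl | hi <;> rcases eq_or_ne j 0 with rfl | hj
    · exact absurd rfl hij
    · simp only [if_pos, if_neg hj]; linarith [hpos j, ht.out]
    · simp only [if_pos, if_neg hi]; linarith [hpos i, ht.out]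
    · simp [hi, hj, hδ.ne', Fin.val_inj, hij]
  · intro t ht
    have hsum : HasDerivAt (fun s => ∑ j ∈ univ.erase (0 : Fin η), V (s + δ * j) + C)
        (∑ j ∈ univ.erase (0 : Fin η), deriv V (t + δ * j)) t :=
      (HasDerivAt.fun_sum fun j _ => ((hV _).hasDerivAt.comp_add_const t _)).add_const C
    refine hsum.congr_of_eventuallyEq ?_
    filter_upwards [Ioi_mem_nhds ht] with s hs
    rw [show x + s • v = x + s • WithLp.toLp 2 (Pi.single 0 e) from rfl,
      pairPotential_add_smul_single, sum_congr rfl fun j _ => by rw [hdist s hs j]]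

end Chain

theorem stmt0_general
    {d η : ℕ} (hd : 0 < d) (hη : 2 < η)
    (V : ℝ → ℝ) (γ : ℝ) (hγ : 0 < γ)
    (hV : Differentiable ℝ V)
    (hV'diff : Differentiable ℝ (deriv V))
    (r₀ : ℝ) (hr₀ : 0 < r₀) (hattain : |deriv (deriv V) r₀| = γ)
    (Vpair : (PiLp 2 fun _ : Fin η => EuclideanSpace ℝ (Fin d)) → ℝ)
    (hVpair : ∀ x, Vpair x =
      (1/2) * ∑ i : Fin η, ∑ j : Fin η, if j ≠ i then V ‖x i - x j‖ else 0)
    (K : NNReal) (hK : LipschitzWith K (gradient Vpair)) :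
    γ * η / 4 ≤ K := by
  have : NeZero η := ⟨by omega⟩
  obtain rfl : Vpair = pairPotential V := funext hVpair
  have he : ‖EuclideanSpace.single (⟨0, hd⟩ : Fin d) (1 : ℝ)‖ = 1 := by simp
  set φ : ℝ → ℝ → ℝ := fun δ t => ∑ j ∈ univ.erase (0 : Fin η), deriv V (t + δ * j)
  have hφ : Continuous φ :=
    continuous_pi fun t => continuous_finsetSum _ fun j _ => hV'diff.continuous.comp (by fun_prop)
  have hlip : LipschitzOnWith K (φ 0) (Ioi 0) :=
    (isClosed_setOfPred_lipschitzOnWith K _).mem_of_tendsto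
      ((hφ.tendsto 0).mono_left (nhdsWithin_le_nhds (s := Ioi 0)))
      (eventually_nhdsWithin_of_forall fun _ hδ => lipschitzOnWith_sum_deriv_add_mul hV he hK hδ)
  have hφ₀ : φ 0 = fun t => ((η : ℝ) - 1) * deriv V t := by
    ext t
    simp only [φ, zero_mul, add_zero, sum_const, card_erase_of_mem (mem_univ _), card_univ,
      Fintype.card_fin, nsmul_eq_mul, Nat.cast_pred (NeZero.pos η)]
  have hbound := ((hV'diff r₀).hasDerivAt.const_mul ((η : ℝ) - 1)).le_of_lipschitzOn
    (Ioi_mem_nhds hr₀) (hφ₀ ▸ hlip)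
  rw [norm_mul, Real.norm_eq_abs, Real.norm_eq_abs, hattain] at hbound
  have hη' : (3 : ℝ) ≤ η := by exact_mod_cast hη
  rw [abs_of_pos (by linarith)] at hbound
  nlinarith

/-- The Lipschitz constant of the gradient of the pairwise potential
`V_pair(x) = (1/2) Σ_{i≠j} V(‖x_i - x_j‖)` is at least `γη/4`, where `γ` is the
Lipschitz constant of `V'` (attained as `|V''(r₀)|` at some `r₀ > 0`). -/
theorem stmt0
    {d η : ℕ} (hd : 0 < d) (hη : 2 < η) (hηeven : Even η)
    (V : ℝ → ℝ) (γ : ℝ) (hγ : 0 < γ)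
    (hV : Differentiable ℝ V)
    (hVlip : LipschitzWith γ.toNNReal (deriv V))
    (hV'diff : Differentiable ℝ (deriv V))
    (hV''cont : Continuous (deriv (deriv V)))
    (r₀ : ℝ) (hr₀ : 0 < r₀) (hattain : |deriv (deriv V) r₀| = γ)
    (Vpair : (PiLp 2 fun _ : Fin η => EuclideanSpace ℝ (Fin d)) → ℝ)
    (hVpair : ∀ x, Vpair x =
      (1/2) * ∑ i : Fin η, ∑ j : Fin η, if j ≠ i then V ‖x i - x j‖ else 0)
    (K : NNReal) (hK : LipschitzWith K (gradient Vpair)) :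
    γ * η / 4 ≤ K :=
  stmt0_general hd hη V γ hγ hV hV'diff r₀ hr₀ hattain Vpair hVpair K hK
end

section
/- Let H be an N×N negative semidefinite Hermitian matrix admitting a sum-of-squares decomposition H = −Σ_{j=0}^{m−1} A_j† A_j. Define the dilated Hermitian matrix 𝒜 = Σ_{j=0}^{m−1} (|0⟩⟨j+1| ⊗ A_j† + |j+1⟩⟨0| ⊗ A_j) acting on ℂ^{m+1} ⊗ ℂ^N. Then 𝒜 is Hermitian and (⟨0| ⊗ I)(−𝒜²)(|0⟩ ⊗ I) = H, i.e. the top-left N×N block of −𝒜² equals H. -/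
open Matrix
open scoped Kronecker

/-! 𝒜 is a block arrowhead matrix: only its first block row `(0, A₀ᴴ, …)` and first block column
`(0, A₀, …)ᵀ` are nonzero, so the `(0, 0)` block of `𝒜²` is the row times the column,
`Σⱼ Aⱼᴴ Aⱼ = -H`. -/

namespace Matrix

variable {α n : Type*} {m : ℕ}

def arrowheadBlock [Semiring α] (B C : Fin m → Matrix n n α) :
    Matrix (Fin (m + 1) × n) (Fin (m + 1) × n) α :=
  ∑ j, (single 0 j.succ 1 ⊗ₖ B j + single j.succ 0 1 ⊗ₖ C j)

section Semiring

variable [Semiring α] (B C : Fin m → Matrix n n α)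

@[simp]
theorem arrowheadBlock_apply_zero_zero (p q : n) : arrowheadBlock B C (0, p) (0, q) = 0 := by
  simp [arrowheadBlock, sum_apply, Fin.succ_ne_zero]

@[simp]
theorem arrowheadBlock_apply_zero_succ (i : Fin m) (p q : n) :
    arrowheadBlock B C (0, p) (i.succ, q) = B i p q := by
  simp [arrowheadBlock, sum_apply, single_apply, Fin.succ_ne_zero]

@[simp]
theorem arrowheadBlock_apply_succ_zero (i : Fin m) (p q : n) :
    arrowheadBlock B C (i.succ, p) (0, q) = C i p q := by
  simp [arrowheadBlock, sum_apply, single_apply, Fin.succ_ne_zero]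

theorem arrowheadBlock_mul_apply_zero_zero [Fintype n] (B' C' : Fin m → Matrix n n α) (p q : n) :
    (arrowheadBlock B C * arrowheadBlock B' C') (0, p) (0, q) = (∑ j, B j * C' j) p q := by
  simp [mul_apply, Fintype.sum_prod_type, Fin.sum_univ_succ, sum_apply]

end Semiring

theorem conjTranspose_arrowheadBlock [CommSemiring α] [StarRing α] (B C : Fin m → Matrix n n α) :
    (arrowheadBlock B C)ᴴ = arrowheadBlock (fun j ↦ (C j)ᴴ) (fun j ↦ (B j)ᴴ) := by
  simp [arrowheadBlock, conjTranspose_sum, conjTranspose_kronecker, add_comm]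

end Matrix

/-- The dilated square-root matrix `𝒜 = Σ_j (|0⟩⟨j+1| ⊗ A_j† + |j+1⟩⟨0| ⊗ A_j)` is
Hermitian and the top-left `N×N` block of `−𝒜²` equals `H = −Σ_j A_j†A_j`. -/
theorem stmt15 {m N : ℕ} (A : Fin m → Matrix (Fin N) (Fin N) ℂ)
    (H : Matrix (Fin N) (Fin N) ℂ)
    (hH : H = -∑ j, (A j)ᴴ * A j)
    (𝒜 : Matrix (Fin (m+1) × Fin N) (Fin (m+1) × Fin N) ℂ)
    (h𝒜 : 𝒜 = ∑ j : Fin m,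
      ((Matrix.single (0 : Fin (m+1)) j.succ (1:ℂ)) ⊗ₖ (A j)ᴴ +
       (Matrix.single (j.succ) (0 : Fin (m+1)) (1:ℂ)) ⊗ₖ (A j))) :
    𝒜ᴴ = 𝒜 ∧ ∀ p q : Fin N, (-(𝒜 * 𝒜)) (0, p) (0, q) = H p q := by
  subst hH
  rw [show 𝒜 = arrowheadBlock (fun j ↦ (A j)ᴴ) A from h𝒜]
  refine ⟨?_, fun p q ↦ ?_⟩
  · simp only [conjTranspose_arrowheadBlock, conjTranspose_conjTranspose]
  · rw [neg_apply, arrowheadBlock_mul_apply_zero_zero, neg_apply]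
end
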